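/- For any positive proper fraction r, the space fdf = {x : Δ^(r)x is almost convergent} is a Banach space under the norm ‖x‖ = sup_{m,n} |t_{mn}(Δ^(r)x)|, where t_{mn}(y) = (1/(m+1)) Σ_{i=0}^m y_{n+i}. -/

import Mathlib

open Filter

/-- The Cesàro-type mean `t_{mn}(x) = (1/(m+1)) ∑_{i=0}^m x_{n+i}`. -/
noncomputable def tmn (x : ℕ → ℝ) (m n : ℕ) : ℝ :=
  (1 / (m + 1 : ℝ)) * ∑ i ∈ Finset.range (m + 1), x (n + i)

/-- `x` is almost convergent to `L`: `t_{mn}(x) → L` as `m → ∞`, uniformly in `n`. -/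
def AlmostConvergentTo (x : ℕ → ℝ) (L : ℝ) : Prop :=
  TendstoUniformly (fun m n => tmn x m n) (fun _ => L) atTop

/-- The space `f` of almost convergent sequences (bounded and almost convergent). -/
def FSet : Set (ℕ → ℝ) :=
  {x | (∃ C, ∀ k, |x k| ≤ C) ∧ ∃ L, AlmostConvergentTo x L}

/-- Generalized binomial coefficient `C(r, m) = r(r-1)⋯(r-m+1)/m!` for real `r`. -/
noncomputable def genBinom (r : ℝ) (m : ℕ) : ℝ :=
  (∏ i ∈ Finset.range m, (r - i)) / (Nat.factorial m : ℝ)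

/-- The fractional difference operator `(Δ^(r)x)_n = ∑_{i=0}^n (-1)^i C(r,i) x_{n-i}`. -/
noncomputable def deltaOp (r : ℝ) (x : ℕ → ℝ) (n : ℕ) : ℝ :=
  ∑ i ∈ Finset.range (n + 1), (-1 : ℝ) ^ i * genBinom r i * x (n - i)

/-- The space `fdf` of sequences whose `Δ^(r)`-transform is almost convergent. -/
def fdf (r : ℝ) : Set (ℕ → ℝ) := {x | deltaOp r x ∈ FSet}


/-!
Reading sequences as generating functions, `Δ^(r)` is multiplication by `(1 - X) ^ r`, a power
series with constant term `1`; hence `Δ^(r)` is a linear bijection of `ℕ → ℝ`. For bounded `y`,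
`sup_{m,n} |t_{mn}(y)|` is the sup norm of `y` (take `m = 0` for one inequality, average for the
other), so the claim reduces to the space `f` of bounded almost convergent sequences being closed
under uniform limits. If `y_j → y` uniformly and `t_{mn}(y_j) → L_j` as `m → ∞` uniformly in `n`,
the `L_j` form a Cauchy sequence, and exchanging the two limits (Moore–Osgood, along the filter
`atTop ×ˢ ⊤` on `(m, n)`) shows that `y` is almost convergent to `lim L_j`.
-/

open Topology

lemma abs_tmn_le {z : ℕ → ℝ} {C : ℝ} (h : ∀ k, |z k| ≤ C) (m n : ℕ) : |tmn z m n| ≤ C := by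
  calc |tmn z m n| ≤ 1 / (m + 1) * ∑ i ∈ Finset.range (m + 1), |z (n + i)| := by
        rw [tmn, abs_mul, abs_of_pos (by positivity : (0 : ℝ) < 1 / (m + 1))]
        gcongr
        exact Finset.abs_sum_le_sum_abs _ _
    _ ≤ 1 / (m + 1) * ∑ _i ∈ Finset.range (m + 1), C := by gcongr; exact h _
    _ = C := by
        simp only [Finset.sum_const, Finset.card_range, nsmul_eq_mul]
        field_simp
        push_cast
        ring

lemma tmn_sub (a b : ℕ → ℝ) (m n : ℕ) : tmn (a - b) m n = tmn a m n - tmn b m n := by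
  simp only [tmn, Pi.sub_apply, Finset.sum_sub_distrib, mul_sub]

lemma tmn_zero_left (z : ℕ → ℝ) (n : ℕ) : tmn z 0 n = z n := by
  simp [tmn]

lemma bddAbove_range_abs_tmn {z : ℕ → ℝ} {C : ℝ} (h : ∀ k, |z k| ≤ C) :
    BddAbove (Set.range fun p : ℕ × ℕ => |tmn z p.1 p.2|) :=
  ⟨C, by rintro _ ⟨p, rfl⟩; exact abs_tmn_le h p.1 p.2⟩

lemma iSup_abs_tmn_le {z : ℕ → ℝ} {C : ℝ} (h : ∀ k, |z k| ≤ C) :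
    (⨆ p : ℕ × ℕ, |tmn z p.1 p.2|) ≤ C :=
  ciSup_le fun p => abs_tmn_le h p.1 p.2

lemma abs_le_iSup_abs_tmn {z : ℕ → ℝ} {C : ℝ} (h : ∀ k, |z k| ≤ C) (k : ℕ) :
    |z k| ≤ ⨆ p : ℕ × ℕ, |tmn z p.1 p.2| := by
  simpa only [tmn_zero_left] using le_ciSup (bddAbove_range_abs_tmn h) (0, k)

lemma exists_abs_sub_le {a b : ℕ → ℝ} (ha : ∃ C, ∀ k, |a k| ≤ C) (hb : ∃ C, ∀ k, |b k| ≤ C) :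
    ∃ C, ∀ k, |(a - b) k| ≤ C := by
  obtain ⟨A, hA⟩ := ha
  obtain ⟨B, hB⟩ := hb
  exact ⟨A + B, fun k => (abs_sub _ _).trans (add_le_add (hA k) (hB k))⟩

lemma exists_abs_le_of_tendstoUniformly {Y : ℕ → ℕ → ℝ} {y : ℕ → ℝ}
    (hbdd : ∀ j, ∃ C, ∀ k, |Y j k| ≤ C) (hY : TendstoUniformly Y y atTop) :
    ∃ C, ∀ k, |y k| ≤ C := by
  obtain ⟨j, hj⟩ := (Metric.tendstoUniformly_iff.mp hY 1 one_pos).exists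
  obtain ⟨C, hC⟩ := hbdd j
  refine ⟨C + 1, fun k => ?_⟩
  have hk := hj k
  rw [Real.dist_eq] at hk
  linarith [abs_sub_abs_le_abs_sub (y k) (Y j k), hC k]

lemma tendstoUniformly_tmn {Y : ℕ → ℕ → ℝ} {y : ℕ → ℝ} (hY : TendstoUniformly Y y atTop) :
    TendstoUniformly (fun j (p : ℕ × ℕ) => tmn (Y j) p.1 p.2) (fun p => tmn y p.1 p.2) atTop := by
  refine Metric.tendstoUniformly_iff.mpr fun ε hε => ?_
  filter_upwards [Metric.tendstoUniformly_iff.mp hY (ε / 2) (half_pos hε)] with j hj p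
  have hle : |tmn (y - Y j) p.1 p.2| ≤ ε / 2 :=
    abs_tmn_le (fun k => (Real.dist_eq _ _ ▸ hj k).le) p.1 p.2
  rw [Real.dist_eq, ← tmn_sub]
  linarith

lemma almostConvergentTo_iff_tendsto {x : ℕ → ℝ} {L : ℝ} :
    AlmostConvergentTo x L ↔ Tendsto (fun p : ℕ × ℕ => tmn x p.1 p.2) (atTop ×ˢ ⊤) (𝓝 L) := by
  rw [AlmostConvergentTo, tendstoUniformly_iff_tendsto, nhds_eq_comap_uniformity,
    tendsto_comap_iff]
  rfl

lemma cauchySeq_of_uniformCauchySeqOn_of_tendsto {α β : Type*} [PseudoMetricSpace β]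
    {F : ℕ → α → β} {l : Filter α} [l.NeBot] {L : ℕ → β}
    (hF : UniformCauchySeqOn F atTop Set.univ) (hL : ∀ j, Tendsto (F j) l (𝓝 (L j))) :
    CauchySeq L := by
  refine Metric.cauchySeq_iff.mpr fun ε hε => ?_
  obtain ⟨N, hN⟩ := Metric.uniformCauchySeqOn_iff.mp hF (ε / 2) (half_pos hε)
  refine ⟨N, fun i hi j hj => ?_⟩
  have hle : dist (L i) (L j) ≤ ε / 2 :=
    le_of_tendsto ((hL i).dist (hL j)) (Eventually.of_forall fun x => (hN i hi j hj x trivial).le)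
  linarith

lemma exists_almostConvergentTo_of_tendstoUniformly {Y : ℕ → ℕ → ℝ} {y : ℕ → ℝ} {L : ℕ → ℝ}
    (hL : ∀ j, AlmostConvergentTo (Y j) (L j)) (hY : TendstoUniformly Y y atTop) :
    ∃ ℓ, AlmostConvergentTo y ℓ := by
  have hT := tendstoUniformly_tmn hY
  simp only [almostConvergentTo_iff_tendsto] at hL ⊢
  have hLcau : CauchySeq L := cauchySeq_of_uniformCauchySeqOn_of_tendsto
    (tendstoUniformlyOn_univ.mpr hT).uniformCauchySeqOn hL
  obtain ⟨ℓ, hℓ⟩ := cauchySeq_tendsto_of_complete hLcau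
  exact ⟨ℓ, hT.tendsto_of_eventually_tendsto (Eventually.of_forall hL) hℓ⟩

lemma exists_mem_FSet_tendstoUniformly {Y : ℕ → ℕ → ℝ} (hY : ∀ j, Y j ∈ FSet)
    (hcau : UniformCauchySeqOn Y atTop Set.univ) : ∃ y ∈ FSet, TendstoUniformly Y y atTop := by
  choose y hy using fun k => cauchySeq_tendsto_of_complete (hcau.cauchySeq (Set.mem_univ k))
  have hYy : TendstoUniformly Y y atTop :=
    tendstoUniformlyOn_univ.mp (hcau.tendstoUniformlyOn_of_tendsto fun k _ => hy k)
  choose L hL using fun j => (hY j).2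
  exact ⟨y, ⟨exists_abs_le_of_tendstoUniformly (fun j => (hY j).1) hYy,
    exists_almostConvergentTo_of_tendstoUniformly hL hYy⟩, hYy⟩

/-- The formal power series of `(1 - X) ^ r`. -/
noncomputable def fracDiffSeries (r : ℝ) : PowerSeries ℝ :=
  PowerSeries.mk fun i => (-1) ^ i * genBinom r i

lemma deltaOp_eq_coeff_mul (r : ℝ) (x : ℕ → ℝ) (n : ℕ) :
    deltaOp r x n = PowerSeries.coeff n (fracDiffSeries r * PowerSeries.mk x) := by
  rw [PowerSeries.coeff_mul, Finset.Nat.sum_antidiagonal_eq_sum_range_succ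
    (fun i j => PowerSeries.coeff i (fracDiffSeries r) * PowerSeries.coeff j (PowerSeries.mk x))]
  simp only [deltaOp, fracDiffSeries, PowerSeries.coeff_mk]

lemma deltaOp_sub (r : ℝ) (a b : ℕ → ℝ) : deltaOp r (a - b) = deltaOp r a - deltaOp r b := by
  ext n
  simp only [deltaOp_eq_coeff_mul, Pi.sub_apply, ← map_sub, ← mul_sub]
  rfl

lemma deltaOp_surjective (r : ℝ) : Function.Surjective (deltaOp r) := by
  intro y
  set φ := (fracDiffSeries r)⁻¹ * PowerSeries.mk y
  have hφ : PowerSeries.mk (fun n => PowerSeries.coeff n φ) = φ :=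
    PowerSeries.ext fun n => PowerSeries.coeff_mk _ _
  have hunit : PowerSeries.constantCoeff (fracDiffSeries r) ≠ 0 := by
    simp [fracDiffSeries, genBinom]
  refine ⟨fun n => PowerSeries.coeff n φ, funext fun n => ?_⟩
  rw [deltaOp_eq_coeff_mul, hφ, ← mul_assoc, PowerSeries.mul_inv_cancel _ hunit, one_mul,
    PowerSeries.coeff_mk]

theorem fdf_banach_space_general (r : ℝ) :
    (∀ x ∈ fdf r, BddAbove (Set.range fun p : ℕ × ℕ => |tmn (deltaOp r x) p.1 p.2|)) ∧
    (∀ X : ℕ → ℕ → ℝ, (∀ j, X j ∈ fdf r) →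
      (∀ ε > (0 : ℝ), ∃ N, ∀ i ≥ N, ∀ j ≥ N,
        (⨆ p : ℕ × ℕ, |tmn (deltaOp r (X i - X j)) p.1 p.2|) < ε) →
      ∃ x ∈ fdf r, ∀ ε > (0 : ℝ), ∃ N, ∀ j ≥ N,
        (⨆ p : ℕ × ℕ, |tmn (deltaOp r (X j - x)) p.1 p.2|) < ε) := by
  refine ⟨fun x hx => bddAbove_range_abs_tmn hx.1.choose_spec, fun X hX hcau => ?_⟩
  have hYcau : UniformCauchySeqOn (fun j => deltaOp r (X j)) atTop Set.univ := by
    refine Metric.uniformCauchySeqOn_iff.mpr fun ε hε => ?_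
    obtain ⟨N, hN⟩ := hcau ε hε
    refine ⟨N, fun i hi j hj k _ => ?_⟩
    obtain ⟨C, hC⟩ := exists_abs_sub_le (hX i).1 (hX j).1
    rw [Real.dist_eq]
    exact (abs_le_iSup_abs_tmn hC k).trans_lt (deltaOp_sub r _ _ ▸ hN i hi j hj)
  obtain ⟨y, hyF, hXy⟩ := exists_mem_FSet_tendstoUniformly hX hYcau
  obtain ⟨x, rfl⟩ := deltaOp_surjective r y
  refine ⟨x, hyF, fun ε hε => ?_⟩
  obtain ⟨N, hN⟩ := eventually_atTop.mp (Metric.tendstoUniformly_iff.mp hXy (ε / 2) (half_pos hε))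
  refine ⟨N, fun j hj => ?_⟩
  rw [deltaOp_sub]
  refine (iSup_abs_tmn_le fun k => ?_).trans_lt (half_lt_self hε)
  rw [Pi.sub_apply, ← Real.dist_eq, dist_comm]
  exact (hN j hj k).le

theorem fdf_banach_space (r : ℝ) (hr0 : 0 < r) (hr1 : r < 1) :
    (∀ x ∈ fdf r, BddAbove (Set.range fun p : ℕ × ℕ => |tmn (deltaOp r x) p.1 p.2|)) ∧
    (∀ X : ℕ → ℕ → ℝ, (∀ j, X j ∈ fdf r) →
      (∀ ε > (0 : ℝ), ∃ N, ∀ i ≥ N, ∀ j ≥ N,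
        (⨆ p : ℕ × ℕ, |tmn (deltaOp r (X i - X j)) p.1 p.2|) < ε) →
      ∃ x ∈ fdf r, ∀ ε > (0 : ℝ), ∃ N, ∀ j ≥ N,
        (⨆ p : ℕ × ℕ, |tmn (deltaOp r (X j - x)) p.1 p.2|) < ε) :=
  fdf_banach_space_general r
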